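/- There exists a constant C > 0 such that for every k ∈ ℤ², ∑_{p ∈ ℤ²} 1/((1+|p+k|²)(1+|p|²)) ≤ C · log(2+|k|)/(1+|k|²). -/

import Mathlib

/-!
Of the two points `p` and `p + k`, the one farther from the origin has squared norm at least
`|k|² / 4`, so the summand is at most `min (1 / (1 + |p|²)², 4 / ((1 + |k|²)(1 + |p|²)))` at the
nearer point. Summing this majorant over square shells `|p|_∞ = n` (of size `O(n)`), the terms with
`n ≲ |k|` form a harmonic sum `O(log |k| / |k|²)`, and the rest a cubic tail `O(1 / |k|²)`.
-/

open scoped ENNReal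

/-- Squared Euclidean norm on `ℤ²`. -/
noncomputable def nsq (p : ℤ × ℤ) : ℝ := (p.1 : ℝ) ^ 2 + (p.2 : ℝ) ^ 2

open Finset

lemma nsq_nonneg (p : ℤ × ℤ) : 0 ≤ nsq p := by
  unfold nsq; positivity

lemma nsq_le_two_mul_add (p k : ℤ × ℤ) : nsq k ≤ 2 * (nsq p + nsq (p + k)) := by
  simp only [nsq, Prod.fst_add, Prod.snd_add, Int.cast_add]
  nlinarith [sq_nonneg (2 * (p.1 : ℝ) + k.1), sq_nonneg (2 * (p.2 : ℝ) + k.2)]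

lemma sq_le_nsq_of_mem_box {n : ℕ} {q : ℤ × ℤ} (hq : q ∈ box n) : (n : ℝ) ^ 2 ≤ nsq q := by
  rw [Int.mem_box] at hq
  subst hq
  rcases le_total q.1.natAbs q.2.natAbs with h | h
  all_goals
    simp only [h, max_eq_left, max_eq_right, nsq, Nat.cast_natAbs, Int.cast_abs, sq_abs]
    linarith [sq_nonneg (q.1 : ℝ), sq_nonneg (q.2 : ℝ)]

lemma Int.card_box_le (n : ℕ) : #(box n : Finset (ℤ × ℤ)) ≤ 8 * n + 1 := by
  rcases eq_or_ne n 0 with rfl | hn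
  · simp
  · rw [Int.card_box hn]; omega

lemma ENNReal.tsum_eq_tsum_sum_box (f : ℤ × ℤ → ℝ≥0∞) :
    ∑' q, f q = ∑' n : ℕ, ∑ q ∈ box n, f q := by
  rw [← ENNReal.tsum_fiberwise f fun q ↦ max q.1.natAbs q.2.natAbs]
  refine tsum_congr fun n ↦ ?_
  have hfiber :
      (fun q : ℤ × ℤ ↦ max q.1.natAbs q.2.natAbs) ⁻¹' {n} = ↑(box n : Finset (ℤ × ℤ)) := by
    ext q; simp
  rw [← Finset.tsum_subtype, hfiber]
  rfl

lemma tsum_comp_nsq_le {g : ℝ → ℝ≥0∞} (hg : AntitoneOn g (Set.Ici 0)) :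
    ∑' q, g (nsq q) ≤ ∑' n : ℕ, (8 * n + 1) * g ((n : ℝ) ^ 2) := by
  rw [ENNReal.tsum_eq_tsum_sum_box]
  refine ENNReal.tsum_le_tsum fun n ↦ ?_
  calc ∑ q ∈ box n, g (nsq q) ≤ ∑ _q ∈ box n, g ((n : ℝ) ^ 2) :=
        sum_le_sum fun q hq ↦
          hg (Set.mem_Ici.mpr (sq_nonneg _)) (nsq_nonneg q) (sq_le_nsq_of_mem_box hq)
    _ = #(box n : Finset (ℤ × ℤ)) * g ((n : ℝ) ^ 2) := by rw [sum_const, nsmul_eq_mul]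
    _ ≤ (8 * n + 1) * g ((n : ℝ) ^ 2) := by
        gcongr
        exact_mod_cast Int.card_box_le n

noncomputable def majorant (E t : ℝ) : ℝ := min (1 / (1 + t) ^ 2) (4 / (E * (1 + t)))

lemma majorant_nonneg {E t : ℝ} (hE : 0 ≤ E) (ht : 0 ≤ t) : 0 ≤ majorant E t := by
  unfold majorant; positivity

lemma majorant_antitoneOn {E : ℝ} (hE : 0 < E) : AntitoneOn (majorant E) (Set.Ici 0) := by
  intro s (hs : 0 ≤ s) t _ hst
  unfold majorant
  gcongr

lemma one_div_mul_le_majorant {A B E : ℝ} (hB : 0 ≤ B) (hBA : B ≤ A) (hE : 0 < E)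
    (hEA : E ≤ 4 * (1 + A)) : 1 / ((1 + A) * (1 + B)) ≤ majorant E B := by
  have hA : 0 ≤ A := hB.trans hBA
  refine le_min ?_ ?_
  · rw [sq]; gcongr
  · rw [div_le_div_iff₀ (by positivity) (by positivity)]
    nlinarith

lemma one_div_mul_le_majorant_add {A B K : ℝ} (hA : 0 ≤ A) (hB : 0 ≤ B) (hK : 0 ≤ K)
    (hKAB : K ≤ 2 * (A + B)) :
    1 / ((1 + A) * (1 + B)) ≤ majorant (1 + K) A + majorant (1 + K) B := by
  have hE : 0 < 1 + K := by positivity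
  rcases le_total B A with hBA | hAB
  · have := one_div_mul_le_majorant hB hBA hE (by linarith)
    have := majorant_nonneg hE.le hA
    linarith
  · have := one_div_mul_le_majorant hA hAB hE (by linarith)
    have := majorant_nonneg hE.le hB
    rw [mul_comm (1 + A)]
    linarith

lemma mul_majorant_sq_le {E : ℝ} (hE : 0 < E) (n : ℕ) :
    (8 * n + 1) * majorant E ((n : ℝ) ^ 2) ≤
      72 * min (1 / ((n : ℝ) + 1) ^ 3) (1 / (E * (n + 1))) := by
  unfold majorant
  rw [mul_min_of_nonneg _ _ (by positivity), mul_min_of_nonneg _ _ (by positivity)]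
  have hn : (0 : ℝ) ≤ n := n.cast_nonneg
  refine min_le_min ?_ ?_ <;>
  · rw [mul_one_div, mul_div_assoc', div_le_div_iff₀ (by positivity) (by positivity)]
    nlinarith [sq_nonneg ((n : ℝ) - 1), mul_nonneg hn (sq_nonneg ((n : ℝ) - 1))]

lemma sum_range_inv_succ_le_one_add_log (N : ℕ) :
    ∑ m ∈ range N, 1 / ((m : ℝ) + 1) ≤ 1 + Real.log N := by
  simpa [harmonic] using harmonic_le_one_add_log N

lemma sum_Ico_inv_succ_pow_three_le {N : ℕ} (hN : 1 ≤ N) (L : ℕ) :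
    ∑ m ∈ Ico N L, 1 / ((m : ℝ) + 1) ^ 3 ≤ 1 / (N : ℝ) ^ 2 := by
  rcases le_or_gt L N with hLN | hNL
  · rw [Ico_eq_empty_of_le hLN, sum_empty]; positivity
  have hN0 : (0 : ℝ) < N := by exact_mod_cast hN
  calc ∑ m ∈ Ico N L, 1 / ((m : ℝ) + 1) ^ 3
      ≤ ∑ m ∈ Ico N L, (1 / (N : ℝ)) * (-(1 / ((m + 1 : ℕ) : ℝ)) - -(1 / (m : ℝ))) := by
        refine sum_le_sum fun m hm ↦ ?_
        have hNm : (N : ℝ) ≤ m := by exact_mod_cast (mem_Ico.mp hm).1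
        have hm0 : (0 : ℝ) < m := hN0.trans_le hNm
        push_cast
        rw [div_le_iff₀ (by positivity)]
        field_simp
        nlinarith
    _ = (1 / (N : ℝ)) * (1 / N - 1 / L) := by
        rw [← mul_sum, sum_Ico_sub (fun m : ℕ ↦ -(1 / (m : ℝ))) hNL.le]
        ring
    _ ≤ 1 / (N : ℝ) ^ 2 := by
        rw [sq, ← one_div_mul_one_div]
        gcongr
        linarith [show (0 : ℝ) ≤ 1 / L by positivity]

lemma sum_range_min_le {K : ℝ} (hK : 0 ≤ K) (M : ℕ) :
    ∑ m ∈ range M, min (1 / ((m : ℝ) + 1) ^ 3) (1 / ((1 + K) * (m + 1))) ≤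
      (2 + Real.log (2 + √K)) / (1 + K) := by
  set N := ⌈√K⌉₊ + 1
  have hsqrtK : √K ≤ ⌈√K⌉₊ := Nat.le_ceil _
  have hKN : 1 + K ≤ (N : ℝ) ^ 2 := by
    simp only [N, Nat.cast_add, Nat.cast_one]
    nlinarith [Real.sq_sqrt hK, Real.sqrt_nonneg K]
  have hN_le : (N : ℝ) ≤ 2 + √K := by
    simp only [N, Nat.cast_add, Nat.cast_one]
    linarith [Nat.ceil_lt_add_one (Real.sqrt_nonneg K)]
  calc ∑ m ∈ range M, min (1 / ((m : ℝ) + 1) ^ 3) (1 / ((1 + K) * (m + 1)))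
      ≤ ∑ m ∈ range (max M N), min (1 / ((m : ℝ) + 1) ^ 3) (1 / ((1 + K) * (m + 1))) :=
        sum_le_sum_of_subset_of_nonneg (range_subset_range.mpr (le_max_left M N))
          fun _ _ _ ↦ by positivity
    _ = ∑ m ∈ range N, min (1 / ((m : ℝ) + 1) ^ 3) (1 / ((1 + K) * (m + 1))) +
          ∑ m ∈ Ico N (max M N), min (1 / ((m : ℝ) + 1) ^ 3) (1 / ((1 + K) * (m + 1))) :=
        (sum_range_add_sum_Ico _ (le_max_right M N)).symm
    _ ≤ (1 / (1 + K)) * ∑ m ∈ range N, 1 / ((m : ℝ) + 1) +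
          ∑ m ∈ Ico N (max M N), 1 / ((m : ℝ) + 1) ^ 3 := by
        rw [mul_sum]
        gcongr with m _ m _
        · exact (min_le_right _ _).trans_eq (one_div_mul_one_div _ _).symm
        · exact min_le_left _ _
    _ ≤ (1 / (1 + K)) * (1 + Real.log N) + 1 / (N : ℝ) ^ 2 := by
        gcongr
        · exact sum_range_inv_succ_le_one_add_log N
        · exact sum_Ico_inv_succ_pow_three_le (Nat.le_add_left 1 _) _
    _ ≤ (1 / (1 + K)) * (1 + Real.log (2 + √K)) + 1 / (1 + K) := by
        gcongr
    _ = (2 + Real.log (2 + √K)) / (1 + K) := by ring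

lemma tsum_ofReal_min_le {K : ℝ} (hK : 0 ≤ K) :
    ∑' n : ℕ, ENNReal.ofReal (min (1 / ((n : ℝ) + 1) ^ 3) (1 / ((1 + K) * (n + 1)))) ≤
      ENNReal.ofReal ((2 + Real.log (2 + √K)) / (1 + K)) := by
  refine ENNReal.tsum_le_of_sum_range_le fun M ↦ ?_
  rw [← ENNReal.ofReal_sum_of_nonneg fun _ _ ↦ by positivity]
  exact ENNReal.ofReal_le_ofReal (sum_range_min_le hK M)

lemma tsum_majorant_nsq_le {K : ℝ} (hK : 0 ≤ K) :
    ∑' q, ENNReal.ofReal (majorant (1 + K) (nsq q)) ≤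
      ENNReal.ofReal (72 * ((2 + Real.log (2 + √K)) / (1 + K))) := by
  have hE : 0 < 1 + K := by positivity
  calc ∑' q, ENNReal.ofReal (majorant (1 + K) (nsq q))
      ≤ ∑' n : ℕ, (8 * n + 1) * ENNReal.ofReal (majorant (1 + K) ((n : ℝ) ^ 2)) :=
        tsum_comp_nsq_le fun s hs t ht hst ↦
          ENNReal.ofReal_le_ofReal (majorant_antitoneOn hE hs ht hst)
    _ ≤ ∑' n : ℕ, ENNReal.ofReal 72 *
          ENNReal.ofReal (min (1 / ((n : ℝ) + 1) ^ 3) (1 / ((1 + K) * (n + 1)))) := by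
        refine ENNReal.tsum_le_tsum fun n ↦ ?_
        have hcoe : (8 * n + 1 : ℝ≥0∞) = ENNReal.ofReal (8 * n + 1) := by
          rw [ENNReal.ofReal_add (by positivity) zero_le_one, ENNReal.ofReal_mul (by positivity)]
          simp
        rw [hcoe, ← ENNReal.ofReal_mul (by positivity), ← ENNReal.ofReal_mul (by positivity)]
        exact ENNReal.ofReal_le_ofReal (mul_majorant_sq_le hE n)
    _ ≤ ENNReal.ofReal (72 * ((2 + Real.log (2 + √K)) / (1 + K))) := by
        rw [ENNReal.tsum_mul_left, ENNReal.ofReal_mul (by norm_num)]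
        gcongr
        exact tsum_ofReal_min_le hK

lemma two_add_log_le_five_mul_log {x : ℝ} (hx : 2 ≤ x) : 2 + Real.log x ≤ 5 * Real.log x := by
  have := Real.log_le_log (by norm_num) hx
  linarith [Real.log_two_gt_d9]

/-- Logarithmically improved 2D convolution bound:
`∑_{p ∈ ℤ²} 1/((1+|p+k|²)(1+|p|²)) ≤ C log(2+|k|)/(1+|k|²)`. -/
theorem lattice_convolution_log_bound :
    ∃ C : ℝ, 0 < C ∧ ∀ k : ℤ × ℤ,
      ∑' p : ℤ × ℤ,
        ENNReal.ofReal (1 / ((1 + nsq (p + k)) * (1 + nsq p))) ≤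
      ENNReal.ofReal (C * Real.log (2 + Real.sqrt (nsq k)) / (1 + nsq k)) := by
  refine ⟨720, by norm_num, fun k ↦ ?_⟩
  have hK := nsq_nonneg k
  set M := fun q ↦ ENNReal.ofReal (majorant (1 + nsq k) (nsq q))
  calc ∑' p, ENNReal.ofReal (1 / ((1 + nsq (p + k)) * (1 + nsq p)))
      ≤ ∑' p, (M (p + k) + M p) := ENNReal.tsum_le_tsum fun p ↦
        (ENNReal.ofReal_le_ofReal <| one_div_mul_le_majorant_add (nsq_nonneg _) (nsq_nonneg p) hK
          (by linarith [nsq_le_two_mul_add p k])).trans ENNReal.ofReal_add_le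
    _ = 2 * ∑' q, M q := by
        rw [ENNReal.tsum_add, two_mul]
        congr 1
        exact (Equiv.addRight k).tsum_eq M
    _ ≤ ENNReal.ofReal 2 * ENNReal.ofReal (72 * ((2 + Real.log (2 + √(nsq k))) / (1 + nsq k))) := by
        rw [ENNReal.ofReal_ofNat]
        gcongr
        exact tsum_majorant_nsq_le hK
    _ ≤ ENNReal.ofReal (720 * Real.log (2 + √(nsq k)) / (1 + nsq k)) := by
        rw [← ENNReal.ofReal_mul zero_le_two]
        refine ENNReal.ofReal_le_ofReal ?_
        have hlog := two_add_log_le_five_mul_log (le_add_of_nonneg_right (Real.sqrt_nonneg (nsq k)))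
        rw [← mul_assoc, ← mul_div_assoc, div_le_div_iff_of_pos_right (by positivity)]
        linarith
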